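/- arXiv:2011.07012 — 3 statements merged into one kernel-verified Lean document; each statement's English description precedes it below -/
import Mathlib

section
/- For W, P, λ, N₀, l > 0 and 0 < ζ < 1, the value ε = W·log₂[1 + {√P(−π²λ + √(π⁴λ² − 16N₀W·log ζ))/(4N₀W·l²)}²] satisfies exp(−(l⁴/P)·N₀W·θ(ε) − (2λπ²l²√(θ(ε)))/(4·P^{1/2}·sin(π/2))) = ζ, where θ(ε) = 2^{ε/W} − 1. -/
/-!
With `t = √θ`, the exponent is `-(a t² + b t)` where `a = l⁴ N₀ W / P` and
`b = λ π² l² / (2 √P)`, so the equation `exp(…) = ζ` is the quadratic `a t² + b t + log ζ = 0`.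
Its discriminant is `l⁴ (π⁴ λ² - 16 N₀ W log ζ) / (4 P)`, and its nonnegative root is exactly the
displayed `√P (-π² λ + √(π⁴ λ² - 16 N₀ W log ζ)) / (4 N₀ W l²)`; the rate `ε` is chosen so that
`θ(ε)` is the square of that root.
-/

open Real

lemma two_rpow_mul_logb_div_sub_one {W x : ℝ} (hW : W ≠ 0) (hx : -1 < x) :
    (2 : ℝ) ^ (W * logb 2 (1 + x) / W) - 1 = x := by
  rw [mul_div_cancel_left₀ _ hW, rpow_logb two_pos (by norm_num) (by linarith)]
  ring

lemma quadratic_eq_zero_of_sq_eq_scaled_discrim {P κ l μ c s : ℝ} (hP : 0 < P) (hκ : κ ≠ 0)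
    (hl : l ≠ 0) (hs : s ^ 2 = μ ^ 2 - 16 * κ * c) :
    l ^ 4 * κ / P * ((√P * (-μ + s) / (4 * κ * l ^ 2)) * (√P * (-μ + s) / (4 * κ * l ^ 2)))
      + μ * l ^ 2 / (2 * √P) * (√P * (-μ + s) / (4 * κ * l ^ 2)) + c = 0 := by
  obtain ⟨r, hr, rfl⟩ : ∃ r, 0 < r ∧ P = r ^ 2 := ⟨√P, sqrt_pos.2 hP, (sq_sqrt hP.le).symm⟩
  rw [sqrt_sq hr.le]
  have hdiscrim : discrim (l ^ 4 * κ / r ^ 2) (μ * l ^ 2 / (2 * r)) c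
      = (l ^ 2 * s / (2 * r)) * (l ^ 2 * s / (2 * r)) := by
    rw [discrim]
    linear_combination (-(l ^ 4 / (4 * r ^ 2))) * hs
  refine (quadratic_eq_zero_iff (by positivity) hdiscrim _).mpr (Or.inl ?_)
  field_simp
  ring

theorem max_target_rate_closed_form_general (W P lam N₀ l ζ : ℝ)
    (hW : 0 < W) (hP : 0 < P) (hN₀ : 0 < N₀) (hl : 0 < l)
    (hζ₀ : 0 < ζ) (hζ₁ : ζ < 1) :
    let ε : ℝ := W * Real.logb 2
      (1 + (Real.sqrt P * (-(π ^ 2 * lam)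
        + Real.sqrt (π ^ 4 * lam ^ 2 - 16 * N₀ * W * Real.log ζ))
        / (4 * N₀ * W * l ^ 2)) ^ 2)
    let θ : ℝ := (2 : ℝ) ^ (ε / W) - 1
    Real.exp (-(l ^ 4 / P) * N₀ * W * θ
        - 2 * lam * π ^ 2 * l ^ 2 * Real.sqrt θ
          / (4 * P ^ ((1 : ℝ) / 2) * Real.sin (π / 2))) = ζ := by
  intro ε θ
  have hdisc : (π ^ 2 * lam) ^ 2 ≤ π ^ 4 * lam ^ 2 - 16 * N₀ * W * log ζ := by
    nlinarith [log_neg hζ₀ hζ₁, mul_pos hN₀ hW]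
  set s := √(π ^ 4 * lam ^ 2 - 16 * N₀ * W * log ζ)
  have hs : s ^ 2 = (π ^ 2 * lam) ^ 2 - 16 * (N₀ * W) * log ζ := by
    rw [sq_sqrt ((sq_nonneg _).trans hdisc)]; ring
  have hsge : π ^ 2 * lam ≤ s := le_sqrt_of_sq_le hdisc
  set A := √P * (-(π ^ 2 * lam) + s) / (4 * N₀ * W * l ^ 2)
  have hA : 0 ≤ A := by
    have : 0 ≤ -(π ^ 2 * lam) + s := by linarith
    positivity
  have hθ : θ = A ^ 2 :=
    two_rpow_mul_logb_div_sub_one hW.ne' (neg_one_lt_zero.trans_le (sq_nonneg A))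
  have hroot := quadratic_eq_zero_of_sq_eq_scaled_discrim hP (mul_pos hN₀ hW).ne' hl.ne' hs
  rw [← exp_log hζ₀, hθ, sqrt_sq hA, sin_pi_div_two, ← sqrt_eq_rpow]
  congr 1
  linear_combination -hroot

theorem max_target_rate_closed_form (W P lam N₀ l ζ : ℝ)
    (hW : 0 < W) (hP : 0 < P) (hlam : 0 < lam) (hN₀ : 0 < N₀) (hl : 0 < l)
    (hζ₀ : 0 < ζ) (hζ₁ : ζ < 1) :
    let ε : ℝ := W * Real.logb 2
      (1 + (Real.sqrt P * (-(π ^ 2 * lam)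
        + Real.sqrt (π ^ 4 * lam ^ 2 - 16 * N₀ * W * Real.log ζ))
        / (4 * N₀ * W * l ^ 2)) ^ 2)
    let θ : ℝ := (2 : ℝ) ^ (ε / W) - 1
    Real.exp (-(l ^ 4 / P) * N₀ * W * θ
        - 2 * lam * π ^ 2 * l ^ 2 * Real.sqrt θ
          / (4 * P ^ ((1 : ℝ) / 2) * Real.sin (π / 2))) = ζ :=
  max_target_rate_closed_form_general W P lam N₀ l ζ hW hP hN₀ hl hζ₀ hζ₁
end

section
/- If X₁, X₂ ~ Gamma(α, β) (independent) and T ~ Exp(ρ) is independent of both, with β > ρ > 0, then for v ≥ c ≥ 0, with w = v − c, P[X₁ + X₂ + T + c ≤ v] = (1/Γ(α))∫₀^w [γ(α, β(w−x)) − (β^α e^{−ρ(w−x)}/(β−ρ)^α)·γ(α, (β−ρ)(w−x))]·(β^α x^{α−1}e^{−βx}/Γ(α)) dx. -/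
/-!
By independence, the law of `X₁ + (X₂ + T)` is the convolution `Γ(α, β) ∗ (Γ(α, β) ∗ Exp(ρ))`.
For laws `μ`, `ν` carried by `[0, ∞)` one has `(μ ∗ ν)(-∞, u] = ∫_{[0, u]} ν(-∞, u - x] dμ(x)`.
For `Γ(α, β) ∗ Exp(ρ)` the exponential CDF `1 - e^{-ρ(s - y)}` splits the gamma density into two
gamma kernels, of rates `β` and `β - ρ`, each of which integrates over `[0, s]` to a lower
incomplete gamma value after rescaling; convolving once more with the density of `X₁` gives the
formula.
-/

open MeasureTheory ProbabilityTheory Real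

/-- Lower incomplete gamma function `γ(a, x) = ∫₀ˣ t^(a-1) e^(-t) dt`. -/
noncomputable def lowerGamma (a x : ℝ) : ℝ :=
  ∫ t in (0 : ℝ)..x, t ^ (a - 1) * Real.exp (-t)

open Set

theorem MeasureTheory.Measure.conv_apply {M : Type*} [AddMonoid M] [MeasurableSpace M]
    [MeasurableAdd₂ M] (μ ν : Measure M) [SFinite ν] {s : Set M} (hs : MeasurableSet s) :
    (μ ∗ ν) s = ∫⁻ x, ν ((x + ·) ⁻¹' s) ∂μ := by
  rw [Measure.conv, Measure.map_apply measurable_add hs, Measure.prod_apply (measurable_add hs)]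
  rfl

theorem conv_Iio_zero {μ ν : Measure ℝ} [SFinite ν] (hμ : μ (Iio 0) = 0) (hν : ν (Iio 0) = 0) :
    (μ ∗ ν) (Iio 0) = 0 := by
  rw [Measure.conv_apply μ ν measurableSet_Iio, ← lintegral_zero]
  refine lintegral_congr_ae ?_
  filter_upwards [measure_eq_zero_iff_ae_notMem.mp hμ] with x hx
  refine measure_mono_null (fun y hy => ?_) hν
  simp only [mem_Iio, not_lt, mem_preimage] at hx hy ⊢
  linarith

theorem conv_real_Iic_eq_setIntegral {μ ν : Measure ℝ} [IsFiniteMeasure ν]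
    (hμ : μ (Iio 0) = 0) (hν : ν (Iio 0) = 0) (u : ℝ) :
    (μ ∗ ν).real (Iic u) = ∫ x in Icc 0 u, ν.real (Iic (u - x)) ∂μ := by
  have hpre (x : ℝ) : (x + ·) ⁻¹' Iic u = Iic (u - x) := by
    ext y; simp [le_sub_iff_add_le']
  have hanti : Antitone fun x => ν (Iic (u - x)) :=
    fun _ _ hab => measure_mono (Iic_subset_Iic.mpr (sub_le_sub_left hab u))
  have hsupp : (fun x => ν (Iic (u - x))) =ᵐ[μ] (Icc 0 u).indicator fun x => ν (Iic (u - x)) := by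
    filter_upwards [measure_eq_zero_iff_ae_notMem.mp hμ] with x hx
    simp only [mem_Iio, not_lt] at hx
    by_cases hxu : x ≤ u
    · rw [indicator_of_mem (show x ∈ Icc 0 u from ⟨hx, hxu⟩)]
    · rw [indicator_of_notMem (fun h => hxu h.2)]
      exact measure_mono_null (Iic_subset_Iio.mpr (by linarith)) hν
  rw [measureReal_def, Measure.conv_apply μ ν measurableSet_Iic]
  simp_rw [hpre]
  rw [lintegral_congr_ae hsupp, lintegral_indicator measurableSet_Icc, ← integral_toReal
    hanti.measurable.aemeasurable (ae_of_all _ fun _ => measure_lt_top ν _)]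
  rfl

theorem gammaMeasure_Iio_zero (a r : ℝ) : gammaMeasure a r (Iio 0) = 0 := by
  rw [gammaMeasure, withDensity_apply _ measurableSet_Iio]
  exact lintegral_gammaPDF_of_nonpos le_rfl

theorem expMeasure_Iio_zero (r : ℝ) : expMeasure r (Iio 0) = 0 :=
  gammaMeasure_Iio_zero 1 r

theorem setIntegral_Icc_gammaMeasure {a r : ℝ} (ha : 0 < a) (hr : 0 < r) (g : ℝ → ℝ) {u : ℝ}
    (hu : 0 ≤ u) :
    ∫ x in Icc 0 u, g x ∂gammaMeasure a r = ∫ x in 0..u, gammaPDFReal a r x * g x := by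
  rw [gammaMeasure, restrict_withDensity measurableSet_Icc,
    integral_withDensity_eq_integral_toReal_smul (show Measurable (gammaPDF a r) from
      (measurable_gammaPDFReal a r).ennreal_ofReal) (ae_of_all _ fun _ => ENNReal.ofReal_lt_top),
    integral_Icc_eq_integral_Ioc, intervalIntegral.integral_of_le hu]
  simp [gammaPDF, ENNReal.toReal_ofReal (gammaPDFReal_nonneg ha hr _)]

theorem gammaMeasure_conv_real_Iic {a r : ℝ} (ha : 0 < a) (hr : 0 < r) {ν : Measure ℝ}
    [IsFiniteMeasure ν] (hν : ν (Iio 0) = 0) {u : ℝ} (hu : 0 ≤ u) :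
    (gammaMeasure a r ∗ ν).real (Iic u)
      = ∫ x in 0..u, gammaPDFReal a r x * ν.real (Iic (u - x)) := by
  rw [conv_real_Iic_eq_setIntegral (gammaMeasure_Iio_zero a r) hν,
    setIntegral_Icc_gammaMeasure ha hr _ hu]

theorem expMeasure_real_Iic {r t : ℝ} (hr : 0 < r) (ht : 0 ≤ t) :
    (expMeasure r).real (Iic t) = 1 - exp (-(r * t)) := by
  have := isProbabilityMeasure_expMeasure hr
  rw [← cdf_eq_real, cdf_expMeasure_eq hr, if_pos ht]

theorem integral_rpow_mul_exp_neg_mul {a b s : ℝ} (hb : 0 < b) (hs : 0 ≤ s) :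
    ∫ y in (0 : ℝ)..s, y ^ (a - 1) * exp (-(b * y)) = lowerGamma a (b * s) / b ^ a := by
  have hsub :
      b * ∫ y in (0 : ℝ)..s, (b * y) ^ (a - 1) * exp (-(b * y)) = lowerGamma a (b * s) := by
    simpa [lowerGamma] using intervalIntegral.smul_integral_comp_mul_left
      (fun t => t ^ (a - 1) * exp (-t)) b (a := 0) (b := s)
  have hscale : ∫ y in (0 : ℝ)..s, (b * y) ^ (a - 1) * exp (-(b * y))
      = b ^ (a - 1) * ∫ y in (0 : ℝ)..s, y ^ (a - 1) * exp (-(b * y)) := by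
    rw [← intervalIntegral.integral_const_mul]
    refine intervalIntegral.integral_congr fun y hy => ?_
    rw [uIcc_of_le hs] at hy
    simp only [mul_rpow hb.le hy.1, mul_assoc]
  rw [hscale, ← mul_assoc, rpow_sub hb, rpow_one, mul_div_cancel₀ _ hb.ne'] at hsub
  rw [← hsub, mul_div_cancel_left₀ _ (rpow_pos_of_pos hb a).ne']

theorem gammaMeasure_conv_expMeasure_real_Iic {α β ρ s : ℝ} (hα : 0 < α) (hρ : 0 < ρ)
    (hβρ : ρ < β) (hs : 0 ≤ s) :
    (gammaMeasure α β ∗ expMeasure ρ).real (Iic s)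
      = 1 / Gamma α * (lowerGamma α (β * s)
          - β ^ α * exp (-ρ * s) / (β - ρ) ^ α * lowerGamma α ((β - ρ) * s)) := by
  have hβ : 0 < β := hρ.trans hβρ
  have := isProbabilityMeasure_expMeasure hρ
  have hint (b : ℝ) : IntervalIntegrable (fun y => y ^ (α - 1) * exp (-(b * y))) volume 0 s :=
    (intervalIntegral.intervalIntegrable_rpow' (by linarith)).mul_continuousOn (by fun_prop)
  have hsplit : ∫ y in (0 : ℝ)..s, gammaPDFReal α β y * (expMeasure ρ).real (Iic (s - y))
      = ∫ y in (0 : ℝ)..s, β ^ α / Gamma α * (y ^ (α - 1) * exp (-(β * y)))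
          - β ^ α / Gamma α * exp (-ρ * s) * (y ^ (α - 1) * exp (-((β - ρ) * y))) := by
    refine intervalIntegral.integral_congr fun y hy => ?_
    rw [uIcc_of_le hs] at hy
    have hexp : exp (-(β * y)) * exp (-(ρ * (s - y))) = exp (-ρ * s) * exp (-((β - ρ) * y)) := by
      rw [← exp_add, ← exp_add]; ring_nf
    simp only [gammaPDFReal, if_pos hy.1, expMeasure_real_Iic hρ (sub_nonneg.mpr hy.2)]
    linear_combination (-(β ^ α / Gamma α * y ^ (α - 1))) * hexp
  rw [gammaMeasure_conv_real_Iic hα hβ (expMeasure_Iio_zero ρ) hs, hsplit,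
    intervalIntegral.integral_sub ((hint β).const_mul _) ((hint (β - ρ)).const_mul _),
    intervalIntegral.integral_const_mul, intervalIntegral.integral_const_mul,
    integral_rpow_mul_exp_neg_mul hβ hs, integral_rpow_mul_exp_neg_mul (sub_pos.mpr hβρ) hs]
  have := (rpow_pos_of_pos hβ α).ne'
  have := (rpow_pos_of_pos (sub_pos.mpr hβρ) α).ne'
  field_simp

theorem ProbabilityTheory.iIndepFun.map_add_add_eq_conv_conv {Ω M : Type*} [MeasurableSpace Ω]
    [AddMonoid M] [MeasurableSpace M] [MeasurableAdd₂ M] {μ : Measure Ω} [IsFiniteMeasure μ]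
    {X Y Z : Ω → M} (h : iIndepFun ![X, Y, Z] μ) (hX : AEMeasurable X μ) (hY : AEMeasurable Y μ)
    (hZ : AEMeasurable Z μ) :
    μ.map (X + (Y + Z)) = μ.map X ∗ (μ.map Y ∗ μ.map Z) := by
  have hmeas (i : Fin 3) : AEMeasurable (![X, Y, Z] i) μ := by
    fin_cases i <;> assumption
  have hYZ : IndepFun Y Z μ := h.indepFun (i := 1) (j := 2) (by decide)
  have hX_YZ : IndepFun X (Y + Z) μ :=
    ((h.indepFun_prodMk₀ hmeas 1 2 0 (by decide) (by decide)).comp measurable_add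
      measurable_id).symm
  rw [hX_YZ.map_add_eq_map_conv_map₀ hX (hY.add hZ), hYZ.map_add_eq_map_conv_map₀ hY hZ]

theorem paoi_cdf_general
    {Ω : Type*} [MeasureSpace Ω] [IsProbabilityMeasure (ℙ : Measure Ω)]
    (X₁ X₂ T : Ω → ℝ) (ρ α β c v : ℝ) (hα : 0 < α) (hρ : 0 < ρ)
    (hβρ : ρ < β) (hv : c ≤ v)
    (hX₁ : Measure.map X₁ ℙ = gammaMeasure α β)
    (hX₂ : Measure.map X₂ ℙ = gammaMeasure α β)
    (hT : Measure.map T ℙ = expMeasure ρ)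
    (hInd : iIndepFun
      ![X₁, X₂, T] ℙ) :
    (ℙ {ω | X₁ ω + X₂ ω + T ω + c ≤ v}).toReal
      = (1 / Real.Gamma α)
        * ∫ x in (0 : ℝ)..(v - c),
            (lowerGamma α (β * (v - c - x))
              - β ^ α * Real.exp (-ρ * (v - c - x)) / (β - ρ) ^ α
                * lowerGamma α ((β - ρ) * (v - c - x)))
            * (β ^ α * x ^ (α - 1) * Real.exp (-β * x) / Real.Gamma α) := by
  have hβ : 0 < β := hρ.trans hβρ
  have := isProbabilityMeasure_gammaMeasure hα hβ
  have := isProbabilityMeasure_expMeasure hρ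
  have hae {X : Ω → ℝ} {μ : Measure ℝ} [IsProbabilityMeasure μ] (hX : Measure.map X ℙ = μ) :
      AEMeasurable X ℙ :=
    aemeasurable_of_map_neZero (hX ▸ inferInstance)
  have hlaw : Measure.map (X₁ + (X₂ + T)) ℙ
      = gammaMeasure α β ∗ (gammaMeasure α β ∗ expMeasure ρ) := by
    rw [hInd.map_add_add_eq_conv_conv (hae hX₁) (hae hX₂) (hae hT), hX₁, hX₂, hT]
  have hsum : AEMeasurable (X₁ + (X₂ + T)) ℙ := (hae hX₁).add ((hae hX₂).add (hae hT))
  have hevent : {ω | X₁ ω + X₂ ω + T ω + c ≤ v} = (X₁ + (X₂ + T)) ⁻¹' Iic (v - c) := by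
    ext ω; simp [le_sub_iff_add_le, add_assoc]
  rw [hevent, ← Measure.map_apply_of_aemeasurable hsum measurableSet_Iic, hlaw,
    ← measureReal_def, gammaMeasure_conv_real_Iic hα hβ (conv_Iio_zero (gammaMeasure_Iio_zero α β)
      (expMeasure_Iio_zero ρ)) (sub_nonneg.mpr hv), ← intervalIntegral.integral_const_mul]
  refine intervalIntegral.integral_congr fun x hx => ?_
  rw [uIcc_of_le (sub_nonneg.mpr hv)] at hx
  rw [gammaMeasure_conv_expMeasure_real_Iic hα hρ hβρ (sub_nonneg.mpr hx.2)]
  simp only [gammaPDFReal, if_pos hx.1, neg_mul]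
  ring

theorem paoi_cdf
    {Ω : Type*} [MeasureSpace Ω] [IsProbabilityMeasure (ℙ : Measure Ω)]
    (X₁ X₂ T : Ω → ℝ) (ρ α β c v : ℝ) (hα : 0 < α) (hρ : 0 < ρ)
    (hβρ : ρ < β) (hc : 0 ≤ c) (hv : c ≤ v)
    (hX₁ : Measure.map X₁ ℙ = gammaMeasure α β)
    (hX₂ : Measure.map X₂ ℙ = gammaMeasure α β)
    (hT : Measure.map T ℙ = expMeasure ρ)
    (hInd : iIndepFun
      ![X₁, X₂, T] ℙ) :
    (ℙ {ω | X₁ ω + X₂ ω + T ω + c ≤ v}).toReal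
      = (1 / Real.Gamma α)
        * ∫ x in (0 : ℝ)..(v - c),
            (lowerGamma α (β * (v - c - x))
              - β ^ α * Real.exp (-ρ * (v - c - x)) / (β - ρ) ^ α
                * lowerGamma α ((β - ρ) * (v - c - x)))
            * (β ^ α * x ^ (α - 1) * Real.exp (-β * x) / Real.Gamma α) :=
  paoi_cdf_general X₁ X₂ T ρ α β c v hα hρ hβρ hv hX₁ hX₂ hT hInd
end

section
/- If X ~ Gamma(α, β) and T ~ Exp(ρ) with β > ρ, independent, then for w ≥ 0, P[X + T ≤ w] = (1/Γ(α))·[γ(α, βw) − (β^α e^{−ρw}/(β−ρ)^α)·γ(α, (β−ρ)w)]. -/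
/-!
By independence the law of `X + T` is the convolution of the two laws, so
`P[X + T ≤ w] = ∫ F_T(w - x) dP_X(x) = ∫₀^w f_X(x) (1 - e^{-ρ(w-x)}) dx`. Since
`e^{-ρ(w-x)} e^{-βx} = e^{-ρw} e^{-(β-ρ)x}`, both terms are gamma integrals
`∫₀^w x^{α-1} e^{-cx} dx = c^{-α} γ(α, cw)`, with `c = β` and `c = β - ρ > 0`.
-/

open MeasureTheory ProbabilityTheory Real

open Set

theorem cdf_conv (μ ν : Measure ℝ) [IsProbabilityMeasure μ] [IsProbabilityMeasure ν] (w : ℝ) :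
    cdf (μ ∗ ν) w = ∫ x, cdf ν (w - x) ∂μ := by
  have hmeas : MeasurableSet ((fun p : ℝ × ℝ => p.1 + p.2) ⁻¹' Iic w) :=
    measurable_add measurableSet_Iic
  have hsection (x : ℝ) : (x + ·) ⁻¹' Iic w = Iic (w - x) := by
    ext y; simp [le_sub_iff_add_le']
  simp_rw [cdf_eq_real, measureReal_def]
  rw [Measure.conv, Measure.map_apply measurable_add measurableSet_Iic, Measure.prod_apply hmeas,
    ← integral_toReal (measurable_measure_prodMk_left hmeas).aemeasurable
      (ae_of_all _ fun _ => measure_lt_top _ _)]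
  simp only [preimage_preimage, hsection]

theorem integral_gammaMeasure {a r : ℝ} (ha : 0 < a) (hr : 0 < r) (f : ℝ → ℝ) :
    ∫ x, f x ∂gammaMeasure a r = ∫ x, gammaPDFReal a r x * f x := by
  have hpdf : Measurable (gammaPDF a r) := (measurable_gammaPDFReal a r).ennreal_ofReal
  rw [gammaMeasure, integral_withDensity_eq_integral_toReal_smul hpdf
    (ae_of_all _ fun _ => ENNReal.ofReal_lt_top)]
  simp only [gammaPDF, ENNReal.toReal_ofReal (gammaPDFReal_nonneg ha hr _), smul_eq_mul]

theorem integral_mul_comp_sub_eq_intervalIntegral {f g : ℝ → ℝ} (hf : ∀ x < 0, f x = 0)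
    (hg : ∀ y < 0, g y = 0) {w : ℝ} (hw : 0 ≤ w) :
    ∫ x, f x * g (w - x) = ∫ x in 0..w, f x * g (w - x) := by
  rw [intervalIntegral.integral_of_le hw, ← integral_Icc_eq_integral_Ioc,
    setIntegral_eq_integral_of_forall_compl_eq_zero]
  intro x hx
  rcases not_and_or.mp hx with hx | hx
  · rw [hf x (not_le.mp hx), zero_mul]
  · rw [hg (w - x) (by linarith [not_le.mp hx]), mul_zero]

theorem intervalIntegrable_rpow_mul_exp_neg_mul {a : ℝ} (ha : 0 < a) (c w : ℝ) :
    IntervalIntegrable (fun x => x ^ (a - 1) * exp (-(c * x))) volume 0 w :=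
  (intervalIntegral.intervalIntegrable_rpow' (by linarith)).mul_continuousOn (by fun_prop)

theorem intervalIntegral_rpow_mul_exp_neg_mul (a : ℝ) {c w : ℝ} (hc : 0 < c) (hw : 0 ≤ w) :
    ∫ x in 0..w, x ^ (a - 1) * exp (-(c * x)) = c ^ (-a) * lowerGamma a (c * w) := by
  have hscale : EqOn (fun x => x ^ (a - 1) * exp (-(c * x)))
      (fun x => c ^ (1 - a) * ((c * x) ^ (a - 1) * exp (-(c * x)))) (uIcc 0 w) := by
    intro x hx
    rw [uIcc_of_le hw] at hx
    dsimp only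
    rw [mul_rpow hc.le hx.1, ← mul_assoc, ← mul_assoc, ← rpow_add hc, sub_add_sub_cancel',
      sub_self, rpow_zero, one_mul]
  rw [intervalIntegral.integral_congr hscale, intervalIntegral.integral_const_mul,
    intervalIntegral.integral_comp_mul_left (fun t => t ^ (a - 1) * exp (-t)) hc.ne', mul_zero,
    smul_eq_mul, ← mul_assoc, ← rpow_neg_one, ← rpow_add hc, lowerGamma]
  ring_nf

theorem gammaPDFReal_of_neg {a r x : ℝ} (hx : x < 0) : gammaPDFReal a r x = 0 :=
  if_neg (not_le.mpr hx)

theorem cdf_expMeasure_of_neg {r y : ℝ} (hr : 0 < r) (hy : y < 0) : cdf (expMeasure r) y = 0 := by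
  rw [cdf_expMeasure_eq hr, if_neg (not_le.mpr hy)]

theorem intervalIntegral_gammaPDFReal_mul_cdf_expMeasure {α β ρ w : ℝ} (hα : 0 < α)
    (hρ : 0 < ρ) (hβρ : ρ < β) (hw : 0 ≤ w) :
    ∫ x in 0..w, gammaPDFReal α β x * cdf (expMeasure ρ) (w - x)
      = (1 / Gamma α) * (lowerGamma α (β * w)
          - β ^ α * exp (-ρ * w) / (β - ρ) ^ α * lowerGamma α ((β - ρ) * w)) := by
  have hβ : 0 < β := hρ.trans hβρ
  have hβρ' : 0 < β - ρ := sub_pos.mpr hβρ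
  have hintegrand : EqOn (fun x => gammaPDFReal α β x * cdf (expMeasure ρ) (w - x))
      (fun x => β ^ α / Gamma α * (x ^ (α - 1) * exp (-(β * x))
        - exp (-ρ * w) * (x ^ (α - 1) * exp (-((β - ρ) * x))))) (uIcc 0 w) := by
    intro x hx
    rw [uIcc_of_le hw] at hx
    simp only [gammaPDFReal, cdf_expMeasure_eq hρ, if_pos hx.1, if_pos (sub_nonneg.mpr hx.2)]
    rw [show -((β - ρ) * x) = -(β * x) + ρ * x by ring, exp_add,
      show -(ρ * (w - x)) = -ρ * w + ρ * x by ring, exp_add]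
    ring
  rw [intervalIntegral.integral_congr hintegrand, intervalIntegral.integral_const_mul,
    intervalIntegral.integral_sub (intervalIntegrable_rpow_mul_exp_neg_mul hα β w)
      ((intervalIntegrable_rpow_mul_exp_neg_mul hα (β - ρ) w).const_mul _),
    intervalIntegral.integral_const_mul, intervalIntegral_rpow_mul_exp_neg_mul α hβ hw,
    intervalIntegral_rpow_mul_exp_neg_mul α hβρ' hw, rpow_neg hβ.le, rpow_neg hβρ'.le]
  field_simp

theorem gamma_plus_exp_cdf
    {Ω : Type*} [MeasureSpace Ω] [IsProbabilityMeasure (ℙ : Measure Ω)]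
    (X T : Ω → ℝ) (ρ α β w : ℝ) (hα : 0 < α) (hρ : 0 < ρ) (hβρ : ρ < β)
    (hw : 0 ≤ w)
    (hX : Measure.map X ℙ = gammaMeasure α β)
    (hT : Measure.map T ℙ = expMeasure ρ)
    (hInd : IndepFun X T ℙ) :
    (ℙ {ω | X ω + T ω ≤ w}).toReal
      = (1 / Real.Gamma α)
        * (lowerGamma α (β * w)
          - β ^ α * Real.exp (-ρ * w) / (β - ρ) ^ α
            * lowerGamma α ((β - ρ) * w)) := by
  have hβ : 0 < β := hρ.trans hβρ
  have : IsProbabilityMeasure (gammaMeasure α β) := isProbabilityMeasure_gammaMeasure hα hβ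
  have : IsProbabilityMeasure (expMeasure ρ) := isProbabilityMeasure_expMeasure hρ
  have hXm : AEMeasurable X ℙ := aemeasurable_of_map_neZero (by rw [hX]; infer_instance)
  have hTm : AEMeasurable T ℙ := aemeasurable_of_map_neZero (by rw [hT]; infer_instance)
  have hlaw : Measure.map (X + T) ℙ = gammaMeasure α β ∗ expMeasure ρ := by
    rw [hInd.map_add_eq_map_conv_map₀ hXm hTm, hX, hT]
  calc (ℙ {ω | X ω + T ω ≤ w}).toReal = cdf (gammaMeasure α β ∗ expMeasure ρ) w := by
        rw [cdf_eq_real, ← hlaw, measureReal_def, Measure.map_apply_of_aemeasurable (hXm.add hTm)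
          measurableSet_Iic]
        rfl
    _ = ∫ x in 0..w, gammaPDFReal α β x * cdf (expMeasure ρ) (w - x) := by
        rw [cdf_conv, integral_gammaMeasure hα hβ,
          integral_mul_comp_sub_eq_intervalIntegral (fun _ => gammaPDFReal_of_neg)
            (fun _ => cdf_expMeasure_of_neg hρ) hw]
    _ = _ := intervalIntegral_gammaPDFReal_mul_cdf_expMeasure hα hρ hβρ hw
end
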